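/- Let S and T be orthogonal projections on ℂ^a ⊕ ℂ^b with diagonal blocks S_A, T_A (a×a) and S_B, T_B (b×b), and assume that none of S_A, T_A, S_B, T_B has 0 or 1 as an eigenvalue. Suppose u_A is a unitary a×a matrix with η(S_A, u_A·T_A·u_A†) ≤ ε. Then there exists a unitary b×b matrix u_B such that η(S, (u_A ⊕ u_B)·T·(u_A ⊕ u_B)†) ≤ √2·ε. -/

import Mathlib

open scoped Classical ComplexOrder Matrix

set_option maxHeartbeats 1600000

open scoped MatrixOrder in
/-- The positive semidefinite square root of a positive semidefinite matrix
(junk value `0` if the matrix is not positive semidefinite). -/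
noncomputable def msqrt {n : Type*} [Fintype n] [DecidableEq n]
    (A : Matrix n n ℂ) : Matrix n n ℂ :=
  if h : A.PosSemidef then CFC.sqrt A else 0

/-- The Hilbert-Schmidt (Frobenius) norm of a matrix. -/
noncomputable def frob {n : Type*} [Fintype n]
    (M : Matrix n n ℂ) : ℝ :=
  Real.sqrt (∑ i, ∑ j, ‖M i j‖ ^ 2)

/-- `η(A,B) = ‖√(1−A)·√B − √A·√(1−B)‖₂`. -/
noncomputable def eta {n : Type*} [Fintype n] [DecidableEq n]
    (A B : Matrix n n ℂ) : ℝ :=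
  frob (msqrt (1 - A) * msqrt B - msqrt A * msqrt (1 - B))

namespace EmbezAux

variable {n : Type*} [Fintype n] [DecidableEq n]

open Matrix

lemma isUnit_left_of_mul {M N : Matrix n n ℂ} (h : IsUnit (M * N)) : IsUnit M := by
  rw [Matrix.isUnit_iff_isUnit_det] at h ⊢
  rw [Matrix.det_mul] at h
  exact isUnit_of_mul_isUnit_left h

lemma posDef_of_isUnit {M : Matrix n n ℂ} (hM : M.PosSemidef) (hu : IsUnit M) :
    M.PosDef := by
  exact hM.posDef_iff_isUnit.mpr hu

open scoped MatrixOrder in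
lemma msqrt_of_posSemidef {A : Matrix n n ℂ} (hA : A.PosSemidef) :
    msqrt A = CFC.sqrt A := dif_pos hA

open scoped MatrixOrder in
lemma msqrt_posSemidef {A : Matrix n n ℂ} (hA : A.PosSemidef) :
    (msqrt A).PosSemidef := by
  rw [msqrt_of_posSemidef hA]; exact Matrix.nonneg_iff_posSemidef.mp (CFC.sqrt_nonneg A)

open scoped MatrixOrder in
lemma msqrt_mul_self {A : Matrix n n ℂ} (hA : A.PosSemidef) :
    msqrt A * msqrt A = A := by
  rw [msqrt_of_posSemidef hA]; exact CFC.sqrt_mul_sqrt_self A (Matrix.nonneg_iff_posSemidef.mpr hA)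

lemma msqrt_herm {A : Matrix n n ℂ} (hA : A.PosSemidef) :
    (msqrt A)ᴴ = msqrt A := (msqrt_posSemidef hA).1

open scoped MatrixOrder in
/-- Uniqueness: if `B` is PSD and `B * B = A` then `msqrt A = B`. -/
lemma msqrt_eq_of_sq {A B : Matrix n n ℂ} (hB : B.PosSemidef) (h : B * B = A) :
    msqrt A = B := by
  have hA : A.PosSemidef := by
    rw [← h]
    nth_rewrite 1 [← hB.1]
    exact Matrix.posSemidef_conjTranspose_mul_self B
  rw [msqrt_of_posSemidef hA]
  exact CFC.sqrt_unique h (Matrix.nonneg_iff_posSemidef.mpr hB)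

lemma msqrt_proj {M : Matrix n n ℂ} (h1 : Mᴴ = M) (h2 : M * M = M) :
    msqrt M = M := by
  have hM : M.PosSemidef := by
    rw [← h2]; nth_rewrite 1 [← h1]
    exact Matrix.posSemidef_conjTranspose_mul_self M
  exact msqrt_eq_of_sq hM h2

lemma msqrt_isUnit {A : Matrix n n ℂ} (hA : A.PosSemidef) (hu : IsUnit A) :
    IsUnit (msqrt A) :=
  isUnit_left_of_mul (h := by rw [msqrt_mul_self hA]; exact hu)

/-- Sylvester-type: if `R` is positive definite and `R*X + X*R = 0` then `X = 0`. -/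
lemma sylvester {R X : Matrix n n ℂ} (hR : R.PosDef) (h : R * X + X * R = 0) :
    X = 0 := by
  have hH := hR.isHermitian
  set U : Matrix n n ℂ := (hH.eigenvectorUnitary : Matrix n n ℂ) with hU
  have hUU : U * star U = 1 := Matrix.mem_unitaryGroup_iff.mp hH.eigenvectorUnitary.2
  have hUU' : star U * U = 1 := Matrix.mem_unitaryGroup_iff'.mp hH.eigenvectorUnitary.2
  set D : Matrix n n ℂ := Matrix.diagonal (RCLike.ofReal ∘ hH.eigenvalues) with hD
  have hspec : R = U * D * star U := hH.spectral_theorem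
  set Y : Matrix n n ℂ := star U * X * U with hY
  have hXY : X = U * Y * star U := by
    rw [hY]
    rw [Matrix.mul_assoc, Matrix.mul_assoc, hUU]
    rw [← Matrix.mul_assoc, ← Matrix.mul_assoc, hUU]
    simp
  have h1 : star U * R = D * star U := by
    rw [hspec, ← Matrix.mul_assoc, ← Matrix.mul_assoc, hUU', Matrix.one_mul]
  have h2 : R * U = U * D := by
    rw [hspec, Matrix.mul_assoc, hUU', Matrix.mul_one]
  have key : D * Y + Y * D = 0 := by
    have h0 := congrArg (fun M => star U * M * U) h
    simp only [Matrix.add_mul, Matrix.mul_add, Matrix.zero_mul, Matrix.mul_zero,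
      Matrix.mul_assoc] at h0
    simp only [hY, Matrix.mul_assoc]
    rw [← Matrix.mul_assoc D, ← h1, ← h2]
    simpa [Matrix.mul_assoc] using h0
  have hYzero : Y = 0 := by
    ext i j
    have hij := congrFun (congrFun (congrArg (fun M => (M : Matrix n n ℂ)) key) i) j
    simp only [Matrix.add_apply, Matrix.zero_apply, hD,
      Matrix.diagonal_mul, Matrix.mul_diagonal] at hij
    have hpos : (0:ℝ) < hH.eigenvalues i + hH.eigenvalues j :=
      add_pos (hR.eigenvalues_pos i) (hR.eigenvalues_pos j)
    simp only [Function.comp_apply] at hij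
    have hz : ((RCLike.ofReal (hH.eigenvalues i) : ℂ) + RCLike.ofReal (hH.eigenvalues j))
        * Y i j = 0 := by
      rw [add_mul, mul_comm ((RCLike.ofReal (hH.eigenvalues j)) : ℂ)]
      exact hij
    rcases mul_eq_zero.mp hz with hc | hc
    · rw [← RCLike.ofReal_add, RCLike.ofReal_eq_zero] at hc
      exact absurd hc (ne_of_gt hpos)
    · simpa using hc
  rw [hXY, hYzero]
  simp

/-- If `B` commutes with a PSD invertible `A`, then `B` commutes with `msqrt A`. -/
lemma commute_msqrt {A B : Matrix n n ℂ} (hA : A.PosSemidef) (hu : IsUnit A)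
    (h : B * A = A * B) : B * msqrt A = msqrt A * B := by
  set R := msqrt A with hR
  have hRpsd : R.PosSemidef := msqrt_posSemidef hA
  have hRu : IsUnit R := msqrt_isUnit hA hu
  have hRpd : R.PosDef := posDef_of_isUnit hRpsd hRu
  have hRR : R * R = A := msqrt_mul_self hA
  have : R * (B * R - R * B) + (B * R - R * B) * R = 0 := by
    calc R * (B * R - R * B) + (B * R - R * B) * R
        = B * (R * R) - (R * R) * B := by
          simp only [Matrix.mul_sub, Matrix.sub_mul, Matrix.mul_assoc]
          abel
      _ = 0 := by rw [hRR, h]; simp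
  have := sylvester hRpd this
  have := sub_eq_zero.mp this
  linear_combination (norm := abel) this

/-- `msqrt` of a unitary conjugation. -/
lemma msqrt_conj {A u : Matrix n n ℂ} (hA : A.PosSemidef)
    (hu1 : u * uᴴ = 1) (hu2 : uᴴ * u = 1) :
    msqrt (u * A * uᴴ) = u * msqrt A * uᴴ := by
  apply msqrt_eq_of_sq
  · exact (msqrt_posSemidef hA).mul_mul_conjTranspose_same u
  · calc u * msqrt A * uᴴ * (u * msqrt A * uᴴ)
        = u * (msqrt A * ((uᴴ * u) * (msqrt A * uᴴ))) := by
          simp only [Matrix.mul_assoc]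
      _ = u * (msqrt A * (msqrt A * uᴴ)) := by rw [hu2, Matrix.one_mul]
      _ = u * ((msqrt A * msqrt A) * uᴴ) := by rw [Matrix.mul_assoc]
      _ = u * A * uᴴ := by rw [msqrt_mul_self hA, Matrix.mul_assoc]

section t2

variable {m p q r : Type*} [Fintype m] [Fintype p] [Fintype q] [Fintype r]
variable [DecidableEq m] [DecidableEq p] [DecidableEq q] [DecidableEq r]

/-- squared Hilbert-Schmidt norm via trace -/
noncomputable def t2 (M : Matrix m n ℂ) : ℝ := (Matrix.trace (Mᴴ * M)).re

lemma t2_eq_sum (M : Matrix m n ℂ) : t2 M = ∑ i, ∑ j, ‖M i j‖ ^ 2 := by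
  unfold t2
  simp only [Matrix.trace, Matrix.diag, Matrix.mul_apply, Matrix.conjTranspose_apply]
  rw [Finset.sum_comm]
  rw [Complex.re_sum]
  congr 1
  ext i
  rw [Complex.re_sum]
  congr 1
  ext j
  rw [Complex.star_def, ← Complex.normSq_eq_conj_mul_self]
  simp only [Complex.normSq_eq_norm_sq]
  exact Complex.ofReal_re _

lemma t2_nonneg (M : Matrix m n ℂ) : 0 ≤ t2 M := by
  rw [t2_eq_sum]
  positivity

lemma t2_neg (M : Matrix m n ℂ) : t2 (-M) = t2 M := by
  simp [t2_eq_sum]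

lemma frob_eq_sqrt_t2 (M : Matrix n n ℂ) : frob M = Real.sqrt (t2 M) := by
  rw [frob, t2_eq_sum]

lemma t2_fromBlocks (A : Matrix n n ℂ) (B : Matrix n m ℂ)
    (C : Matrix m n ℂ) (D : Matrix m m ℂ) :
    t2 (Matrix.fromBlocks A B C D) = t2 A + t2 B + t2 C + t2 D := by
  simp only [t2_eq_sum]
  rw [Fintype.sum_sum_type]
  simp only [Fintype.sum_sum_type]
  simp only [Matrix.fromBlocks, Matrix.of_apply, Sum.elim_inl, Sum.elim_inr,
    Finset.sum_add_distrib]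
  ring

lemma t2_mul_right (M : Matrix r p ℂ) (u : Matrix p q ℂ) (h : u * uᴴ = 1) :
    t2 (M * u) = t2 M := by
  unfold t2
  have : (M * u)ᴴ * (M * u) = uᴴ * (Mᴴ * M * u) := by
    rw [Matrix.conjTranspose_mul]
    simp [Matrix.mul_assoc]
  rw [this, Matrix.trace_mul_comm, Matrix.mul_assoc, h, Matrix.mul_one]

lemma t2_mul_left (u : Matrix p q ℂ) (M : Matrix p r ℂ) (h : u * uᴴ = 1) :
    t2 (uᴴ * M) = t2 M := by
  unfold t2
  have : (uᴴ * M)ᴴ * (uᴴ * M) = Mᴴ * (u * uᴴ) * M := by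
    rw [Matrix.conjTranspose_mul, Matrix.conjTranspose_conjTranspose]
    simp [Matrix.mul_assoc]
  rw [this, h, Matrix.mul_one]

lemma swap_head {A B : Matrix n n ℂ} (h : A * B = B * A) (C : Matrix n n ℂ) :
    A * (B * C) = B * (A * C) := by
  rw [← Matrix.mul_assoc, h, Matrix.mul_assoc]

/-- Core trace identity. -/
lemma core_identity (X Y Z W : Matrix n n ℂ)
    (hX : Xᴴ = X) (hY : Yᴴ = Y) (hZ : Zᴴ = Z) (hW : Wᴴ = W)
    (hXY : X * Y = Y * X) (hZW : Z * W = W * Z)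
    (hY2 : Y * Y = 1 - X * X) (hW2 : W * W = 1 - Z * Z) :
    t2 (Z * Z - X * X) + t2 (Z * W - X * Y) = t2 (Y * Z - X * W) := by
  unfold t2
  rw [← Complex.add_re]
  congr 1
  simp only [Matrix.conjTranspose_sub, Matrix.conjTranspose_mul, hX, hY, hZ, hW]
  simp only [Matrix.mul_sub, Matrix.sub_mul, Matrix.trace_sub, Matrix.trace_add]
  have e1 : Matrix.trace (Z * Z * (X * X)) = Matrix.trace (X * X * (Z * Z)) :=
    Matrix.trace_mul_comm _ _
  have e2 : Matrix.trace (W * Z * (Z * W)) =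
      Matrix.trace (Z * Z) - Matrix.trace (Z * Z * (Z * Z)) := by
    have : W * Z * (Z * W) = Z * Z - Z * Z * (Z * Z) := by
      rw [← hZW]
      calc Z * W * (Z * W) = Z * (W * (Z * W)) := by rw [Matrix.mul_assoc]
        _ = Z * (Z * (W * W)) := by rw [swap_head hZW.symm]
        _ = Z * Z * (W * W) := by rw [Matrix.mul_assoc]
        _ = Z * Z - Z * Z * (Z * Z) := by rw [hW2, Matrix.mul_sub, Matrix.mul_one]
    rw [this, Matrix.trace_sub]
  have e3 : Matrix.trace (W * Z * (X * Y)) = Matrix.trace (X * Y * (Z * W)) := by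
    rw [← hZW, Matrix.trace_mul_comm]
  have e4 : Matrix.trace (Y * X * (Z * W)) = Matrix.trace (X * Y * (Z * W)) := by
    rw [← hXY]
  have e5 : Matrix.trace (Y * X * (X * Y)) =
      Matrix.trace (X * X) - Matrix.trace (X * X * (Z * Z))
        + Matrix.trace (X * X * (Z * Z)) - Matrix.trace (X * X * (X * X)) := by
    have : Y * X * (X * Y) = X * X - X * X * (X * X) := by
      rw [← hXY]
      calc X * Y * (X * Y) = X * (Y * (X * Y)) := by rw [Matrix.mul_assoc]
        _ = X * (X * (Y * Y)) := by rw [swap_head hXY.symm]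
        _ = X * X * (Y * Y) := by rw [Matrix.mul_assoc]
        _ = X * X - X * X * (X * X) := by rw [hY2, Matrix.mul_sub, Matrix.mul_one]
    rw [this, Matrix.trace_sub]
    ring
  have e6 : Matrix.trace (Z * Y * (Y * Z)) =
      Matrix.trace (Z * Z) - Matrix.trace (X * X * (Z * Z)) := by
    have : Z * Y * (Y * Z) = Z * (Y * Y) * Z := by simp [Matrix.mul_assoc]
    rw [this, hY2, Matrix.mul_sub, Matrix.mul_one, Matrix.sub_mul, Matrix.trace_sub]
    congr 1
    calc Matrix.trace (Z * (X * X) * Z) = Matrix.trace (Z * (X * X * Z)) := by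
          rw [Matrix.mul_assoc]
      _ = Matrix.trace (X * X * Z * Z) := by rw [Matrix.trace_mul_comm]
      _ = Matrix.trace (X * X * (Z * Z)) := by rw [Matrix.mul_assoc]
  have e7 : Matrix.trace (Z * Y * (X * W)) = Matrix.trace (X * Y * (Z * W)) := by
    calc Matrix.trace (Z * Y * (X * W)) = Matrix.trace (Z * (Y * (X * W))) := by
          rw [Matrix.mul_assoc]
      _ = Matrix.trace (Y * (X * W) * Z) := by rw [Matrix.trace_mul_comm]
      _ = Matrix.trace (Y * (X * (W * Z))) := by simp [Matrix.mul_assoc]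
      _ = Matrix.trace (X * (Y * (Z * W))) := by rw [swap_head hXY.symm, ← hZW]
      _ = Matrix.trace (X * Y * (Z * W)) := by rw [Matrix.mul_assoc]
  have e8 : Matrix.trace (W * X * (Y * Z)) = Matrix.trace (X * Y * (Z * W)) := by
    calc Matrix.trace (W * X * (Y * Z)) = Matrix.trace (W * (X * (Y * Z))) := by
          rw [Matrix.mul_assoc]
      _ = Matrix.trace (X * (Y * Z) * W) := by rw [Matrix.trace_mul_comm]
      _ = Matrix.trace (X * (Y * (Z * W))) := by simp [Matrix.mul_assoc]
      _ = Matrix.trace (X * Y * (Z * W)) := by rw [Matrix.mul_assoc]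
  have e9 : Matrix.trace (W * X * (X * W)) =
      Matrix.trace (X * X) - Matrix.trace (X * X * (Z * Z)) := by
    have : W * X * (X * W) = W * (X * X) * W := by simp [Matrix.mul_assoc]
    rw [this]
    calc Matrix.trace (W * (X * X) * W) = Matrix.trace (X * X * W * W) := by
          rw [Matrix.mul_assoc, Matrix.trace_mul_comm, Matrix.mul_assoc]
      _ = Matrix.trace (X * X * (W * W)) := by rw [Matrix.mul_assoc]
      _ = Matrix.trace (X * X) - Matrix.trace (X * X * (Z * Z)) := by
          rw [hW2, Matrix.mul_sub, Matrix.mul_one, Matrix.trace_sub]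
  rw [e1, e2, e3, e4, e5, e6, e7, e8, e9]
  ring

end t2

lemma mcancel {p q r : Type*} [Fintype p] [Fintype q] [Fintype r]
    [DecidableEq p] [DecidableEq q]
    {A : Matrix p q ℂ} {B : Matrix q p ℂ} (h : A * B = 1) (M : Matrix p r ℂ) :
    A * (B * M) = M := by
  rw [← Matrix.mul_assoc, h, Matrix.one_mul]

/-- The polar-type structure of an off-diagonal block of a projection. -/
lemma polar_structure {p q : Type*} [Fintype p] [Fintype q] [DecidableEq p] [DecidableEq q]
    (P : Matrix p p ℂ) (Xs : Matrix p q ℂ) (Qs : Matrix q q ℂ)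
    (h11 : P * P + Xs * Xsᴴ = P) (h12 : P * Xs + Xs * Qs = Xs)
    (h22 : Xsᴴ * Xs + Qs * Qs = Qs)
    (hP0 : IsUnit P) (hP1 : IsUnit (1 - P)) (hQ0 : IsUnit Qs) (hQ1 : IsUnit (1 - Qs)) :
    ∃ u : Matrix p q ℂ, u * uᴴ = 1 ∧ uᴴ * u = 1 ∧
      msqrt (P - P * P) * u = Xs ∧ Qs = uᴴ * ((1 - P) * u) := by
  have hXX : Xs * Xsᴴ = P - P * P := by rw [eq_sub_iff_add_eq, add_comm]; exact h11
  have hXtX : Xsᴴ * Xs = Qs - Qs * Qs := by rw [eq_sub_iff_add_eq]; exact h22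
  have hPPpsd : (P - P * P).PosSemidef := by
    rw [← hXX]; exact Matrix.posSemidef_self_mul_conjTranspose Xs
  have hPPunit : IsUnit (P - P * P) := by
    have : P * (1 - P) = P - P * P := by rw [Matrix.mul_sub, Matrix.mul_one]
    rw [← this]; exact hP0.mul hP1
  have hQQunit : IsUnit (Qs - Qs * Qs) := by
    have : Qs * (1 - Qs) = Qs - Qs * Qs := by rw [Matrix.mul_sub, Matrix.mul_one]
    rw [← this]; exact hQ0.mul hQ1
  set H := msqrt (P - P * P) with hHdef
  have hHH : H * H = P - P * P := msqrt_mul_self hPPpsd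
  have hHherm : Hᴴ = H := msqrt_herm hPPpsd
  have hHunit : IsUnit H := msqrt_isUnit hPPpsd hPPunit
  have hHdet : IsUnit H.det := (Matrix.isUnit_iff_isUnit_det H).mp hHunit
  have hHHi : H * H⁻¹ = 1 := Matrix.mul_nonsing_inv H hHdet
  have hHiH : H⁻¹ * H = 1 := Matrix.nonsing_inv_mul H hHdet
  have hHiherm : (H⁻¹)ᴴ = H⁻¹ := by rw [Matrix.conjTranspose_nonsing_inv, hHherm]
  set u := H⁻¹ * Xs with hudef
  have huu : u * uᴴ = 1 := by
    rw [hudef, Matrix.conjTranspose_mul, hHiherm]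
    calc H⁻¹ * Xs * (Xsᴴ * H⁻¹) = H⁻¹ * (Xs * Xsᴴ) * H⁻¹ := by
          simp [Matrix.mul_assoc]
      _ = H⁻¹ * (H * H) * H⁻¹ := by rw [hXX, hHH]
      _ = 1 := by
          rw [← Matrix.mul_assoc, hHiH, Matrix.one_mul, hHHi]
  -- left inverse of u
  have hXtXdet : IsUnit (Xsᴴ * Xs).det := by
    rw [hXtX, ← Matrix.isUnit_iff_isUnit_det]; exact hQQunit
  set K := (Xsᴴ * Xs)⁻¹ * Xsᴴ * H with hKdef
  have hKu : K * u = 1 := by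
    rw [hKdef, hudef]
    calc (Xsᴴ * Xs)⁻¹ * Xsᴴ * H * (H⁻¹ * Xs)
        = (Xsᴴ * Xs)⁻¹ * Xsᴴ * (H * H⁻¹) * Xs := by simp [Matrix.mul_assoc]
      _ = (Xsᴴ * Xs)⁻¹ * (Xsᴴ * Xs) := by
          rw [hHHi, Matrix.mul_one, Matrix.mul_assoc]
      _ = 1 := Matrix.nonsing_inv_mul _ hXtXdet
  have huu' : uᴴ * u = 1 := by
    have e1 : K * (u * (uᴴ * u)) = uᴴ * u := by
      rw [← Matrix.mul_assoc, ← Matrix.mul_assoc, hKu, Matrix.one_mul]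
    have e2 : K * (u * (uᴴ * u)) = 1 := by
      rw [← Matrix.mul_assoc u, huu, Matrix.one_mul, hKu]
    rw [← e1, e2]
  have hHu : H * u = Xs := by rw [hudef, mcancel hHHi]
  -- P commutes with H
  have hPH : P * H = H * P :=
    commute_msqrt hPPpsd hPPunit (by noncomm_ring)
  have hP1H : (1 - P) * H = H * (1 - P) := by
    rw [Matrix.sub_mul, Matrix.mul_sub, Matrix.one_mul, Matrix.mul_one, hPH]
  -- Q equation
  have hXsQ : Xs * Qs = (1 - P) * Xs := by
    rw [Matrix.sub_mul, Matrix.one_mul, eq_sub_iff_add_eq, add_comm]; exact h12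
  have huQ : u * Qs = (1 - P) * u := by
    have step : H * (u * Qs) = H * ((1 - P) * u) := by
      rw [← Matrix.mul_assoc, hHu, hXsQ, ← Matrix.mul_assoc, ← hP1H,
        Matrix.mul_assoc, hHu]
    calc u * Qs = H⁻¹ * (H * (u * Qs)) := by rw [mcancel hHiH]
      _ = H⁻¹ * (H * ((1 - P) * u)) := by rw [step]
      _ = (1 - P) * u := by rw [mcancel hHiH]
  refine ⟨u, huu, huu', hHu, ?_⟩
  calc Qs = (uᴴ * u) * Qs := by rw [huu', Matrix.one_mul]
    _ = uᴴ * ((1 - P) * u) := by rw [Matrix.mul_assoc, huQ]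

section blocks

variable {k l : Type*} [Fintype k] [Fintype l] [DecidableEq k] [DecidableEq l]

lemma toBlocks₁₁_conjTranspose (M : Matrix (k ⊕ l) (k ⊕ l) ℂ) :
    (Mᴴ).toBlocks₁₁ = (M.toBlocks₁₁)ᴴ := by ext i j; rfl

lemma toBlocks₂₂_conjTranspose (M : Matrix (k ⊕ l) (k ⊕ l) ℂ) :
    (Mᴴ).toBlocks₂₂ = (M.toBlocks₂₂)ᴴ := by ext i j; rfl

lemma toBlocks₂₁_conjTranspose (M : Matrix (k ⊕ l) (k ⊕ l) ℂ) :
    (Mᴴ).toBlocks₂₁ = (M.toBlocks₁₂)ᴴ := by ext i j; rfl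

lemma toBlocks₁₁_one : (1 : Matrix (k ⊕ l) (k ⊕ l) ℂ).toBlocks₁₁ = 1 := by
  ext i j
  simp [Matrix.toBlocks₁₁, Matrix.one_apply]

lemma toBlocks₁₁_sub (M N : Matrix (k ⊕ l) (k ⊕ l) ℂ) :
    (M - N).toBlocks₁₁ = M.toBlocks₁₁ - N.toBlocks₁₁ := by ext i j; rfl

lemma fromBlocks_sub (A A' : Matrix k k ℂ) (B B' : Matrix k l ℂ)
    (C C' : Matrix l k ℂ) (D D' : Matrix l l ℂ) :
    Matrix.fromBlocks A B C D - Matrix.fromBlocks A' B' C' D' =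
      Matrix.fromBlocks (A - A') (B - B') (C - C') (D - D') := by
  ext i j
  rcases i with i | i <;> rcases j with j | j <;> rfl

end blocks

end EmbezAux

theorem mono_to_bipartite {a b : ℕ} (ε : ℝ)
    (S T : Matrix (Fin a ⊕ Fin b) (Fin a ⊕ Fin b) ℂ)
    (hShermitian : Sᴴ = S) (hSproj : S * S = S)
    (hThermitian : Tᴴ = T) (hTproj : T * T = T)
    (hSA0 : IsUnit (Matrix.toBlocks₁₁ S)) (hSA1 : IsUnit (1 - Matrix.toBlocks₁₁ S))
    (hSB0 : IsUnit (Matrix.toBlocks₂₂ S)) (hSB1 : IsUnit (1 - Matrix.toBlocks₂₂ S))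
    (hTA0 : IsUnit (Matrix.toBlocks₁₁ T)) (hTA1 : IsUnit (1 - Matrix.toBlocks₁₁ T))
    (hTB0 : IsUnit (Matrix.toBlocks₂₂ T)) (hTB1 : IsUnit (1 - Matrix.toBlocks₂₂ T))
    (uA : Matrix (Fin a) (Fin a) ℂ) (huA : uA ∈ Matrix.unitaryGroup (Fin a) ℂ)
    (hclose : eta (Matrix.toBlocks₁₁ S) (uA * Matrix.toBlocks₁₁ T * uAᴴ) ≤ ε) :
    ∃ uB : Matrix (Fin b) (Fin b) ℂ,
      uB ∈ Matrix.unitaryGroup (Fin b) ℂ ∧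
      eta S (Matrix.fromBlocks uA 0 0 uB * T * (Matrix.fromBlocks uA 0 0 uB)ᴴ) ≤
        Real.sqrt 2 * ε := by
  classical
  have huA1 : uA * uAᴴ = 1 := by
    have := Matrix.mem_unitaryGroup_iff.mp huA
    rwa [Matrix.star_eq_conjTranspose] at this
  have huA2 : uAᴴ * uA = 1 := by
    have := Matrix.mem_unitaryGroup_iff'.mp huA
    rwa [Matrix.star_eq_conjTranspose] at this
  set P := Matrix.toBlocks₁₁ S with hPdef
  set Xs := Matrix.toBlocks₁₂ S with hXsdef
  set Qs := Matrix.toBlocks₂₂ S with hQsdef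
  set R := Matrix.toBlocks₁₁ T with hRdef
  set Xt := Matrix.toBlocks₁₂ T with hXtdef
  set Qt := Matrix.toBlocks₂₂ T with hQtdef
  -- hermitian blocks and block decomposition
  have hPh : Pᴴ = P := by
    rw [hPdef, ← EmbezAux.toBlocks₁₁_conjTranspose, hShermitian]
  have hRh : Rᴴ = R := by
    rw [hRdef, ← EmbezAux.toBlocks₁₁_conjTranspose, hThermitian]
  have h21S : Matrix.toBlocks₂₁ S = Xsᴴ := by
    rw [hXsdef, ← EmbezAux.toBlocks₂₁_conjTranspose, hShermitian]
  have h21T : Matrix.toBlocks₂₁ T = Xtᴴ := by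
    rw [hXtdef, ← EmbezAux.toBlocks₂₁_conjTranspose, hThermitian]
  have hSrw : Matrix.fromBlocks P Xs Xsᴴ Qs = S := by
    rw [← h21S]; exact Matrix.fromBlocks_toBlocks S
  have hTrw : Matrix.fromBlocks R Xt Xtᴴ Qt = T := by
    rw [← h21T]; exact Matrix.fromBlocks_toBlocks T
  -- block equations from S*S = S
  have hSblocks := hSproj
  rw [← hSrw, Matrix.fromBlocks_multiply, Matrix.fromBlocks_inj] at hSblocks
  obtain ⟨hS11, hS12, -, hS22⟩ := hSblocks
  have hTblocks := hTproj
  rw [← hTrw, Matrix.fromBlocks_multiply, Matrix.fromBlocks_inj] at hTblocks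
  obtain ⟨hT11, hT12, -, hT22⟩ := hTblocks
  -- positivity
  have hSpsd : S.PosSemidef := by
    rw [← hSproj]; nth_rewrite 1 [← hShermitian]
    exact Matrix.posSemidef_conjTranspose_mul_self S
  have hTpsd : T.PosSemidef := by
    rw [← hTproj]; nth_rewrite 1 [← hThermitian]
    exact Matrix.posSemidef_conjTranspose_mul_self T
  have hPpsd : P.PosSemidef := hSpsd.submatrix Sum.inl
  have hRpsd : R.PosSemidef := hTpsd.submatrix Sum.inl
  have h1Sh : (1 - S)ᴴ = 1 - S := by
    rw [Matrix.conjTranspose_sub, hShermitian, Matrix.conjTranspose_one]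
  have h1Sproj : (1 - S) * (1 - S) = 1 - S := by
    have h : (1 - S) * (1 - S) = 1 - S - S + S * S := by noncomm_ring
    rw [h, hSproj]; abel
  have h1Spsd : (1 - S).PosSemidef := by
    rw [← h1Sproj]; nth_rewrite 1 [← h1Sh]
    exact Matrix.posSemidef_conjTranspose_mul_self _
  have h1Th : (1 - T)ᴴ = 1 - T := by
    rw [Matrix.conjTranspose_sub, hThermitian, Matrix.conjTranspose_one]
  have h1Tproj : (1 - T) * (1 - T) = 1 - T := by
    have h : (1 - T) * (1 - T) = 1 - T - T + T * T := by noncomm_ring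
    rw [h, hTproj]; abel
  have h1Tpsd : (1 - T).PosSemidef := by
    rw [← h1Tproj]; nth_rewrite 1 [← h1Th]
    exact Matrix.posSemidef_conjTranspose_mul_self _
  have h1Ppsd : (1 - P).PosSemidef := by
    have h : (1 : Matrix (Fin a) (Fin a) ℂ) - P = Matrix.toBlocks₁₁ (1 - S) := by
      rw [EmbezAux.toBlocks₁₁_sub, EmbezAux.toBlocks₁₁_one, hPdef]
    rw [h]
    exact h1Spsd.submatrix Sum.inl
  have h1Rpsd : (1 - R).PosSemidef := by
    have h : (1 : Matrix (Fin a) (Fin a) ℂ) - R = Matrix.toBlocks₁₁ (1 - T) := by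
      rw [EmbezAux.toBlocks₁₁_sub, EmbezAux.toBlocks₁₁_one, hRdef]
    rw [h]
    exact h1Tpsd.submatrix Sum.inl
  -- polar structures
  obtain ⟨u, huu, huu', hHu, hQsEq⟩ :=
    EmbezAux.polar_structure P Xs Qs hS11 hS12 hS22 hSA0 hSA1 hSB0 hSB1
  obtain ⟨v, hvv, hvv', hHtv, hQtEq⟩ :=
    EmbezAux.polar_structure R Xt Qt hT11 hT12 hT22 hTA0 hTA1 hTB0 hTB1
  -- the unitary on the B side
  refine ⟨uᴴ * uA * v, ?_, ?_⟩
  · rw [Matrix.mem_unitaryGroup_iff, Matrix.star_eq_conjTranspose]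
    simp only [Matrix.conjTranspose_mul, Matrix.conjTranspose_conjTranspose]
    calc uᴴ * uA * v * (vᴴ * (uAᴴ * u))
        = uᴴ * (uA * (v * (vᴴ * (uAᴴ * u)))) := by simp only [Matrix.mul_assoc]
      _ = 1 := by rw [EmbezAux.mcancel hvv, EmbezAux.mcancel huA1, huu']
  set uB := uᴴ * uA * v with huBdef
  have huB2 : uBᴴ * uB = 1 := by
    rw [huBdef]
    simp only [Matrix.conjTranspose_mul, Matrix.conjTranspose_conjTranspose]
    calc vᴴ * (uAᴴ * u) * (uᴴ * uA * v)
        = vᴴ * (uAᴴ * (u * (uᴴ * (uA * v)))) := by simp only [Matrix.mul_assoc]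
      _ = vᴴ * v := by rw [EmbezAux.mcancel huu, EmbezAux.mcancel huA2]
      _ = 1 := hvv'
  set R' := uA * R * uAᴴ with hR'def
  -- units
  have huAunit : IsUnit uA := EmbezAux.isUnit_left_of_mul (by rw [huA1]; exact isUnit_one)
  have huAHunit : IsUnit uAᴴ := EmbezAux.isUnit_left_of_mul (by rw [huA2]; exact isUnit_one)
  have hR'psd : R'.PosSemidef := hRpsd.mul_mul_conjTranspose_same uA
  have h1R' : (1 : Matrix (Fin a) (Fin a) ℂ) - R' = uA * (1 - R) * uAᴴ := by
    rw [Matrix.mul_sub, Matrix.sub_mul, Matrix.mul_one, huA1]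
  have h1R'psd : ((1 : Matrix (Fin a) (Fin a) ℂ) - R').PosSemidef := by
    rw [h1R']; exact h1Rpsd.mul_mul_conjTranspose_same uA
  have hR'unit : IsUnit R' := (huAunit.mul hTA0).mul huAHunit
  have h1R'unit : IsUnit ((1 : Matrix (Fin a) (Fin a) ℂ) - R') := by
    rw [h1R']; exact (huAunit.mul hTA1).mul huAHunit
  -- square roots
  set Xm := msqrt P with hXmdef
  set Y := msqrt ((1 : Matrix (Fin a) (Fin a) ℂ) - P) with hYdef
  set Z := msqrt R' with hZdef
  set W := msqrt ((1 : Matrix (Fin a) (Fin a) ℂ) - R') with hWdef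
  have hXm2 : Xm * Xm = P := EmbezAux.msqrt_mul_self hPpsd
  have hY2 : Y * Y = 1 - P := EmbezAux.msqrt_mul_self h1Ppsd
  have hZ2 : Z * Z = R' := EmbezAux.msqrt_mul_self hR'psd
  have hW2 : W * W = 1 - R' := EmbezAux.msqrt_mul_self h1R'psd
  have hXmh : Xmᴴ = Xm := EmbezAux.msqrt_herm hPpsd
  have hYh : Yᴴ = Y := EmbezAux.msqrt_herm h1Ppsd
  have hZh : Zᴴ = Z := EmbezAux.msqrt_herm hR'psd
  have hWh : Wᴴ = W := EmbezAux.msqrt_herm h1R'psd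
  have hXmP : Xm * P = P * Xm := by
    rw [← hXm2, Matrix.mul_assoc]
  have hXm1P : Xm * (1 - P) = (1 - P) * Xm := by
    rw [Matrix.mul_sub, Matrix.sub_mul, Matrix.mul_one, Matrix.one_mul, hXmP]
  have hXmY : Xm * Y = Y * Xm := EmbezAux.commute_msqrt h1Ppsd hSA1 hXm1P
  have hZR' : Z * R' = R' * Z := by
    rw [← hZ2, Matrix.mul_assoc]
  have hZ1R' : Z * (1 - R') = (1 - R') * Z := by
    rw [Matrix.mul_sub, Matrix.sub_mul, Matrix.mul_one, Matrix.one_mul, hZR']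
  have hZW : Z * W = W * Z := EmbezAux.commute_msqrt h1R'psd h1R'unit hZ1R'
  -- product-of-commuting-roots identities
  have hsq_prod : ∀ (A B SA SB : Matrix (Fin a) (Fin a) ℂ),
      A.PosSemidef → B.PosSemidef → IsUnit B → SA = msqrt A → SB = msqrt B →
      SA * SB = SB * SA → msqrt (A * B) = SA * SB := by
    intro A B SA SB hA hB hBu hSA hSB hcomm
    have hSApsd : SA.PosSemidef := hSA ▸ EmbezAux.msqrt_posSemidef hA
    have hSBpsd : SB.PosSemidef := hSB ▸ EmbezAux.msqrt_posSemidef hB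
    have hSBu : IsUnit SB := hSB ▸ EmbezAux.msqrt_isUnit hB hBu
    apply EmbezAux.msqrt_eq_of_sq
    · -- SA * SB is PSD
      have hc : SA * msqrt SB = msqrt SB * SA :=
        EmbezAux.commute_msqrt hSBpsd hSBu hcomm
      have hrw : SA * SB = (msqrt SB)ᴴ * SA * msqrt SB := by
        calc SA * SB = SA * (msqrt SB * msqrt SB) := by
              rw [EmbezAux.msqrt_mul_self hSBpsd]
          _ = SA * msqrt SB * msqrt SB := by rw [Matrix.mul_assoc]
          _ = msqrt SB * SA * msqrt SB := by rw [hc]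
          _ = (msqrt SB)ᴴ * SA * msqrt SB := by rw [EmbezAux.msqrt_herm hSBpsd]
      rw [hrw]
      exact hSApsd.conjTranspose_mul_mul_same (msqrt SB)
    · calc SA * SB * (SA * SB) = SA * (SB * SA * SB) := by simp only [Matrix.mul_assoc]
        _ = SA * (SA * SB * SB) := by rw [← hcomm]
        _ = SA * SA * (SB * SB) := by simp only [Matrix.mul_assoc]
        _ = A * B := by
            rw [hSA, hSB, EmbezAux.msqrt_mul_self hA, EmbezAux.msqrt_mul_self hB]
  have hPP : P - P * P = P * (1 - P) := by rw [Matrix.mul_sub, Matrix.mul_one]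
  have hRR' : R' - R' * R' = R' * (1 - R') := by rw [Matrix.mul_sub, Matrix.mul_one]
  have hH_XY : msqrt (P - P * P) = Xm * Y := by
    rw [hPP]
    exact hsq_prod P (1 - P) Xm Y hPpsd h1Ppsd hSA1 rfl rfl hXmY
  have hH'_ZW : msqrt (R' - R' * R') = Z * W := by
    rw [hRR']
    exact hsq_prod R' (1 - R') Z W hR'psd h1R'psd h1R'unit rfl rfl hZW
  -- conjugation of the T-side square root
  have hRRpsd : (R - R * R).PosSemidef := by
    have hXXt : Xt * Xtᴴ = R - R * R := by rw [eq_sub_iff_add_eq, add_comm]; exact hT11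
    rw [← hXXt]; exact Matrix.posSemidef_self_mul_conjTranspose Xt
  have hHt_conj : uA * msqrt (R - R * R) * uAᴴ = msqrt (R' - R' * R') := by
    have hh : R' - R' * R' = uA * (R - R * R) * uAᴴ := by
      rw [Matrix.mul_sub, Matrix.sub_mul]
      congr 1
      rw [hR'def]
      calc uA * R * uAᴴ * (uA * R * uAᴴ)
          = uA * (R * ((uAᴴ * uA) * (R * uAᴴ))) := by simp only [Matrix.mul_assoc]
        _ = uA * (R * (R * uAᴴ)) := by rw [huA2, Matrix.one_mul]
        _ = uA * (R * R) * uAᴴ := by simp only [Matrix.mul_assoc]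
    rw [hh, EmbezAux.msqrt_conj hRRpsd huA1 huA2]
  -- block form of the conjugated projection
  set U := Matrix.fromBlocks uA (0 : Matrix (Fin a) (Fin b) ℂ)
    (0 : Matrix (Fin b) (Fin a) ℂ) uB with hUdef
  have hUH : Uᴴ = Matrix.fromBlocks uAᴴ 0 0 uBᴴ := by
    rw [hUdef, Matrix.fromBlocks_conjTranspose]
    simp
  have hT'' : U * T * Uᴴ = Matrix.fromBlocks (uA * R * uAᴴ) (uA * Xt * uBᴴ)
      (uB * Xtᴴ * uAᴴ) (uB * Qt * uBᴴ) := by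
    rw [← hTrw, hUH, hUdef, Matrix.fromBlocks_multiply, Matrix.fromBlocks_multiply]
    simp only [Matrix.zero_mul, Matrix.mul_zero, add_zero, zero_add,
      Matrix.mul_assoc]
  -- identify the blocks
  have hHtherm : (msqrt (R - R * R))ᴴ = msqrt (R - R * R) := EmbezAux.msqrt_herm hRRpsd
  have hb12 : uA * Xt * uBᴴ = msqrt (R' - R' * R') * u := by
    rw [← hHtv, huBdef]
    simp only [Matrix.conjTranspose_mul, Matrix.conjTranspose_conjTranspose]
    calc uA * (msqrt (R - R * R) * v) * (vᴴ * (uAᴴ * u))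
        = uA * (msqrt (R - R * R) * (v * (vᴴ * (uAᴴ * u)))) := by
          simp only [Matrix.mul_assoc]
      _ = uA * (msqrt (R - R * R) * (uAᴴ * u)) := by rw [EmbezAux.mcancel hvv]
      _ = (uA * msqrt (R - R * R) * uAᴴ) * u := by simp only [Matrix.mul_assoc]
      _ = msqrt (R' - R' * R') * u := by rw [hHt_conj]
  have hb21 : uB * Xtᴴ * uAᴴ = uᴴ * msqrt (R' - R' * R') := by
    rw [← hHtv, huBdef]
    simp only [Matrix.conjTranspose_mul, hHtherm]
    calc uᴴ * uA * v * (vᴴ * msqrt (R - R * R)) * uAᴴ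
        = uᴴ * (uA * (v * (vᴴ * (msqrt (R - R * R) * uAᴴ)))) := by
          simp only [Matrix.mul_assoc]
      _ = uᴴ * (uA * (msqrt (R - R * R) * uAᴴ)) := by rw [EmbezAux.mcancel hvv]
      _ = uᴴ * (uA * msqrt (R - R * R) * uAᴴ) := by simp only [Matrix.mul_assoc]
      _ = uᴴ * msqrt (R' - R' * R') := by rw [hHt_conj]
  have hb22 : uB * Qt * uBᴴ = uᴴ * ((1 - R') * u) := by
    rw [hQtEq, huBdef]
    simp only [Matrix.conjTranspose_mul, Matrix.conjTranspose_conjTranspose]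
    calc uᴴ * uA * v * (vᴴ * ((1 - R) * v)) * (vᴴ * (uAᴴ * u))
        = uᴴ * (uA * (v * (vᴴ * ((1 - R) * (v * (vᴴ * (uAᴴ * u))))))) := by
          simp only [Matrix.mul_assoc]
      _ = uᴴ * (uA * ((1 - R) * (uAᴴ * u))) := by
          rw [EmbezAux.mcancel hvv, EmbezAux.mcancel hvv]
      _ = uᴴ * ((uA * (1 - R) * uAᴴ) * u) := by simp only [Matrix.mul_assoc]
      _ = uᴴ * ((1 - R') * u) := by rw [← h1R']
  -- difference in block form
  have hXsH : Xs = Xm * Y * u := by rw [← hHu, hH_XY]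
  have hXsHc : (Xm * Y * u)ᴴ = uᴴ * (Xm * Y) := by
    rw [Matrix.conjTranspose_mul, Matrix.conjTranspose_mul, hXmh, hYh, ← hXmY]
  have hdiff : U * T * Uᴴ - S = Matrix.fromBlocks (Z * Z - Xm * Xm)
      ((Z * W - Xm * Y) * u) (uᴴ * (Z * W - Xm * Y)) (uᴴ * ((Xm * Xm - Z * Z) * u)) := by
    rw [hT'', hb12, hb21, hb22, ← hSrw, EmbezAux.fromBlocks_sub, hH'_ZW, hXsH, hQsEq]
    rw [Matrix.fromBlocks_inj]
    refine ⟨?_, ?_, ?_, ?_⟩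
    · rw [hZ2, hXm2, hR'def]
    · rw [Matrix.sub_mul]
    · rw [hXsHc, ← Matrix.mul_sub]
    · rw [hXm2, hZ2, ← Matrix.mul_sub, ← Matrix.sub_mul, sub_sub_sub_cancel_left]
  -- the t2 computation
  have hcore := EmbezAux.core_identity Xm Y Z W hXmh hYh hZh hWh hXmY hZW
    (by rw [hY2, hXm2]) (by rw [hW2, hZ2])
  have ht2 : EmbezAux.t2 (U * T * Uᴴ - S) = 2 * EmbezAux.t2 (Y * Z - Xm * W) := by
    rw [hdiff, EmbezAux.t2_fromBlocks]
    rw [EmbezAux.t2_mul_right _ u huu, EmbezAux.t2_mul_left u _ huu,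
      EmbezAux.t2_mul_left u _ huu, EmbezAux.t2_mul_right _ u huu]
    have hneg : EmbezAux.t2 (Xm * Xm - Z * Z) = EmbezAux.t2 (Z * Z - Xm * Xm) := by
      rw [← neg_sub, EmbezAux.t2_neg]
    rw [hneg]
    linarith
  -- eta S T'' = frob (T'' - S)
  have hT''herm : (U * T * Uᴴ)ᴴ = U * T * Uᴴ := by
    simp only [Matrix.conjTranspose_mul, Matrix.conjTranspose_conjTranspose, hThermitian,
      Matrix.mul_assoc]
  have hUHU : Uᴴ * U = 1 := by
    rw [hUH, hUdef, Matrix.fromBlocks_multiply]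
    simp only [Matrix.mul_zero, Matrix.zero_mul, add_zero, zero_add,
      huA2, huB2]
    exact Matrix.fromBlocks_one
  have hT''proj : (U * T * Uᴴ) * (U * T * Uᴴ) = U * T * Uᴴ := by
    calc (U * T * Uᴴ) * (U * T * Uᴴ) = U * (T * ((Uᴴ * U) * (T * Uᴴ))) := by
          simp only [Matrix.mul_assoc]
      _ = U * (T * (T * Uᴴ)) := by rw [hUHU, Matrix.one_mul]
      _ = U * (T * T) * Uᴴ := by simp only [Matrix.mul_assoc]
      _ = U * T * Uᴴ := by rw [hTproj]
  have h1T''h : (1 - U * T * Uᴴ)ᴴ = 1 - U * T * Uᴴ := by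
    rw [Matrix.conjTranspose_sub, hT''herm, Matrix.conjTranspose_one]
  have h1T''proj : (1 - U * T * Uᴴ) * (1 - U * T * Uᴴ) = 1 - U * T * Uᴴ := by
    have h : (1 - U * T * Uᴴ) * (1 - U * T * Uᴴ)
        = 1 - U * T * Uᴴ - U * T * Uᴴ + (U * T * Uᴴ) * (U * T * Uᴴ) := by noncomm_ring
    rw [h, hT''proj]; abel
  have hetaeq : eta S (U * T * Uᴴ) = frob (U * T * Uᴴ - S) := by
    unfold eta
    rw [EmbezAux.msqrt_proj h1Sh h1Sproj, EmbezAux.msqrt_proj hShermitian hSproj,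
      EmbezAux.msqrt_proj hT''herm hT''proj, EmbezAux.msqrt_proj h1T''h h1T''proj]
    congr 1
    noncomm_ring
  -- the hypothesis hclose
  have hclose' : frob (Y * Z - Xm * W) ≤ ε := by
    unfold eta at hclose
    exact hclose
  have hε : 0 ≤ ε := by
    refine le_trans ?_ hclose'
    rw [frob]
    exact Real.sqrt_nonneg _
  have hte : EmbezAux.t2 (Y * Z - Xm * W) ≤ ε ^ 2 := by
    have h1 : Real.sqrt (EmbezAux.t2 (Y * Z - Xm * W)) ≤ ε := by
      rw [← EmbezAux.frob_eq_sqrt_t2]; exact hclose'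
    calc EmbezAux.t2 (Y * Z - Xm * W)
        = Real.sqrt (EmbezAux.t2 (Y * Z - Xm * W)) ^ 2 :=
          (Real.sq_sqrt (EmbezAux.t2_nonneg _)).symm
      _ ≤ ε ^ 2 := by
          apply pow_le_pow_left₀ (Real.sqrt_nonneg _) h1
  -- conclusion
  show eta S (U * T * Uᴴ) ≤ Real.sqrt 2 * ε
  rw [hetaeq, EmbezAux.frob_eq_sqrt_t2, ht2]
  calc Real.sqrt (2 * EmbezAux.t2 (Y * Z - Xm * W)) ≤ Real.sqrt (2 * ε ^ 2) := by
        apply Real.sqrt_le_sqrt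
        linarith
    _ = Real.sqrt 2 * ε := by
        rw [Real.sqrt_mul (by norm_num : (0:ℝ) ≤ 2), Real.sqrt_sq hε]
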